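/- arXiv:2106.07743 — 2 statements merged into one kernel-verified Lean document; each statement's English description precedes it below -/
import Mathlib

section
/- Let X and V be complex Hilbert spaces with X separable, and let A : X → X* be a positive linear operator with the factorization A = S*TS, where S : X → V is a compact injective bounded linear operator and T : V → V is a bounded linear operator coercive on Range(S). Then for ℓ ∈ X*, ℓ ∈ Range(S*) if and only if Σ_n (1/λ_n) |⟨x_n, ℓ⟩_{X×X*}|² < ∞, where {λ_n; x_n; ℓ_n} is the spectral data of the (positive compact) operator A. -/
open Complex InnerProductSpace Filter Topology ENNReal TopologicalSpace

noncomputable section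

local notation "⟪" x ", " y "⟫" => @inner ℂ _ _ x y

/-- `X*`: the continuous dual of a complex Hilbert space `X`, modeled as the space of
continuous conjugate-linear functionals, so that the dual pairing
`⟨x, ℓ⟩_{X×X*} := conj (ℓ x)` is sesquilinear (linear in `x`, conjugate-linear in `ℓ`). -/
abbrev ADual (X : Type*) [NormedAddCommGroup X] [InnerProductSpace ℂ X] := X →L⋆[ℂ] ℂ

section defs
variable {X : Type*} [NormedAddCommGroup X] [InnerProductSpace ℂ X]

/-- The sesquilinear dual pairing `⟨x, ℓ⟩_{X×X*}`. -/
def dpair (x : X) (ℓ : ADual X) : ℂ := starRingEnd ℂ (ℓ x)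

variable [CompleteSpace X]

/-- `J : X* → X`, the Riesz isometry, determined by `(x, Jℓ)_X = ⟨x, ℓ⟩_{X×X*}`
(with the paper's inner product, linear in the first slot; in Mathlib's convention
this reads `⟪Jℓ, x⟫ = conj (ℓ x)` for all `x`). -/
def rieszJ (ℓ : ADual X) : X :=
  (InnerProductSpace.toDual ℂ X).symm
    { toFun := fun x => starRingEnd ℂ (ℓ x)
      map_add' := fun x y => by simp
      map_smul' := fun c x => by simp [mul_comm]
      cont := continuous_star.comp ℓ.continuous }

/-- A bounded operator `A : X → X*` is positive if `⟨x, Ax⟩_{X×X*} > 0`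
(i.e. it is a positive real number) for every `x ≠ 0`. -/
def IsPositiveOp (A : X →L[ℂ] ADual X) : Prop :=
  ∀ x : X, x ≠ 0 → 0 < (dpair x (A x)).re ∧ (dpair x (A x)).im = 0

/-- Spectral data `{λ_n; x_n; ℓ_n}` of a positive compact operator `A : X → X*`:
a nonincreasing sequence `λ_n > 0` tending to `0`, an orthonormal basis `x_n` of `X`
of eigenvectors of `JA` with `(JA)x_n = λ_n x_n`, and the dual basis `ℓ_n = J⁻¹x_n`. -/
structure SpectralData (A : X →L[ℂ] ADual X) (lam : ℕ → ℝ) (e : ℕ → X)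
    (l : ℕ → ADual X) : Prop where
  pos : ∀ n, 0 < lam n
  anti : Antitone lam
  tendsto_zero : Tendsto lam atTop (𝓝 0)
  orthonormal : Orthonormal ℂ e
  complete : (Submodule.span ℂ (Set.range e)).topologicalClosure = ⊤
  eig : ∀ n, rieszJ (A (e n)) = (lam n : ℂ) • e n
  dual_basis : ∀ n, rieszJ (l n) = e n

/-- A family of filter functions `f_α : (0, λ₁] → [0, ∞)`, `α > 0`, with
`f_α(t) → 1` as `α → 0` for every `t ∈ (0, λ₁]` and `f_α(t) ≤ C_reg`. -/
def IsFilterFamily (lam : ℕ → ℝ) (Creg : ℝ) (f : ℝ → ℝ → ℝ) : Prop :=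
  0 < Creg ∧
    (∀ t ∈ Set.Ioc (0 : ℝ) (lam 0), Tendsto (fun α => f α t) (𝓝[>] (0 : ℝ)) (𝓝 1)) ∧
    (∀ α > (0 : ℝ), ∀ t ∈ Set.Ioc (0 : ℝ) (lam 0), 0 ≤ f α t ∧ f α t ≤ Creg)

/-- `x_α`, the regularized solution of `Ax = ℓ` for the filter family `f`:
`x_α = Σ_n (f_α(λ_n)/λ_n) conj(⟨x_n, ℓ⟩) x_n`. -/
def IsRegSolution (lam : ℕ → ℝ) (e : ℕ → X) (f : ℝ → ℝ → ℝ) (ℓ : ADual X)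
    (xa : ℝ → X) : Prop :=
  ∀ α : ℝ, 0 < α →
    HasSum
      (fun n => (((f α (lam n) / lam n : ℝ) : ℂ) * starRingEnd ℂ (dpair (e n) ℓ)) • e n)
      (xa α)

end defs

section adj
variable {X V : Type*} [NormedAddCommGroup X] [InnerProductSpace ℂ X] [CompleteSpace X]
  [NormedAddCommGroup V] [InnerProductSpace ℂ V] [CompleteSpace V]

/-- The adjoint `S* : V → X*` of a bounded operator `S : X → V`, determined by
`(Sx, v)_V = ⟨x, S*v⟩_{X×X*}` for all `x ∈ X`, `v ∈ V`. -/
def hadj (S : X →L[ℂ] V) : V →L[ℂ] ADual X :=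
  LinearMap.mkContinuous
    { toFun := fun v =>
        { toFun := fun x => ⟪S x, v⟫
          map_add' := fun x y => by simp [inner_add_left]
          map_smul' := fun c x => by simp [inner_smul_left, mul_comm]
          cont := (S.continuous.inner continuous_const) }
      map_add' := fun v w => by ext x; simp [inner_add_right]
      map_smul' := fun c v => by ext x; simp [inner_smul_right] }
    ‖S‖
    (fun v => by
      apply ContinuousLinearMap.opNorm_le_bound
      · positivity
      · intro x
        calc ‖⟪S x, v⟫‖ ≤ ‖S x‖ * ‖v‖ := norm_inner_le_norm _ _
          _ ≤ (‖S‖ * ‖x‖) * ‖v‖ := by gcongr; exact S.le_opNorm x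
          _ = ‖S‖ * ‖v‖ * ‖x‖ := by ring)

/-- A bounded operator `T : V → V` is coercive on the range of `S : X → V` if there is
`β > 0` with `β‖Sx‖² ≤ (Sx, TSx)_V` for all `x ∈ X`. -/
def CoerciveOnRange (S : X →L[ℂ] V) (T : V →L[ℂ] V) : Prop :=
  ∃ β : ℝ, 0 < β ∧ ∀ x : X, β * ‖S x‖ ^ 2 ≤ (⟪T (S x), S x⟫).re

end adj

/-!
Coercivity of `T` and the factorization `A = S*TS` give, for every finite combination
`x = Σ cₙ xₙ` of the eigenvectors, `β‖Sx‖² ≤ Re ⟨x, Ax⟩ = Σ λₙ |cₙ|²`. With `cₙ = ℓ(xₙ)/λₙ`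
the right-hand side is a partial sum of the Picard series `Σ |ℓ(xₙ)|²/λₙ`.

If `ℓ = S*v`, that partial sum is `ℓ(x) = (Sx, v)`, hence at most `‖Sx‖‖v‖`, and the inequality
bounds it by `‖v‖²/β`. Conversely, if the Picard series converges, the inequality makes
`Σ cₙ Sxₙ` a Cauchy series; its sum `w` satisfies
`(S*Tw)(xₘ) = Σₙ cₙ (Sxₘ, TSxₙ) = λₘ cₘ = ℓ(xₘ)`, so `ℓ = S*(Tw)` because the `xₙ` span a
dense subspace.
-/

open ComplexConjugate

lemma lam_mul_norm_div_sq {lam : ℝ} (hlam : 0 < lam) (z : ℂ) :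
    lam * ‖z / lam‖ ^ 2 = ‖z‖ ^ 2 / lam := by
  rw [norm_div, norm_real, Real.norm_of_nonneg hlam.le]
  field_simp

lemma summable_of_mul_sq_norm_sum_le {ι E : Type*} [NormedAddCommGroup E] [CompleteSpace E]
    {f : ι → E} {w : ι → ℝ} {β : ℝ} (hβ : 0 < β)
    (h : ∀ t : Finset ι, β * ‖∑ i ∈ t, f i‖ ^ 2 ≤ ∑ i ∈ t, w i) (hw : Summable w) :
    Summable f := by
  refine summable_iff_vanishing_norm.mpr fun ε hε => ?_
  obtain ⟨s, hs⟩ := summable_iff_vanishing_norm.mp hw (β * ε ^ 2) (by positivity)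
  refine ⟨s, fun t ht => ?_⟩
  have hsq : β * ‖∑ i ∈ t, f i‖ ^ 2 < β * ε ^ 2 :=
    (h t).trans_lt ((le_abs_self _).trans_lt (hs t ht))
  exact lt_of_pow_lt_pow_left₀ 2 hε.le (lt_of_mul_lt_mul_left hsq hβ.le)

section Dual
variable {X : Type*} [NormedAddCommGroup X] [InnerProductSpace ℂ X]

lemma norm_dpair (x : X) (ℓ : ADual X) : ‖dpair x ℓ‖ = ‖ℓ x‖ := by
  simp [dpair]

lemma apply_sum_div_smul (ℓ : ADual X) (lam : ℕ → ℝ) (e : ℕ → X) (t : Finset ℕ) :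
    ℓ (∑ n ∈ t, (ℓ (e n) / lam n) • e n) = ((∑ n ∈ t, ‖ℓ (e n)‖ ^ 2 / lam n : ℝ) : ℂ) := by
  simp only [map_sum, ContinuousLinearMap.map_smulₛₗ, smul_eq_mul, map_div₀, conj_ofReal]
  push_cast
  refine Finset.sum_congr rfl fun n _ => ?_
  rw [div_mul_eq_mul_div, conj_mul']

end Dual

section Adjoint
variable {X V : Type*} [NormedAddCommGroup X] [InnerProductSpace ℂ X]
  [NormedAddCommGroup V] [InnerProductSpace ℂ V] {S : X →L[ℂ] V} {T : V →L[ℂ] V}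
  {lam : ℕ → ℝ} {e : ℕ → X}

lemma hadj_apply (v : V) (x : X) : hadj S v x = ⟪S x, v⟫ := rfl

lemma CoerciveOnRange.exists_mul_sq_norm_le_re (hT : CoerciveOnRange S T) :
    ∃ β > 0, ∀ x, β * ‖S x‖ ^ 2 ≤ ((hadj S).comp (T.comp S) x x).re := by
  obtain ⟨β, hβ, h⟩ := hT
  refine ⟨β, hβ, fun x => ?_⟩
  rw [ContinuousLinearMap.comp_apply, hadj_apply, ← inner_conj_symm, conj_re]
  exact h x

lemma sum_norm_hadj_apply_sq_div_le {β : ℝ} (hβ : 0 < β) (hlam : ∀ n, 0 < lam n)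
    (hcoer : ∀ (c : ℕ → ℂ) (t : Finset ℕ),
      β * ‖S (∑ n ∈ t, c n • e n)‖ ^ 2 ≤ ∑ n ∈ t, lam n * ‖c n‖ ^ 2)
    (v : V) (t : Finset ℕ) :
    ∑ n ∈ t, ‖hadj S v (e n)‖ ^ 2 / lam n ≤ ‖v‖ ^ 2 / β := by
  set ℓ := hadj S v
  set x := ∑ n ∈ t, (ℓ (e n) / lam n) • e n
  set P := ∑ n ∈ t, ‖ℓ (e n)‖ ^ 2 / lam n
  have hP : 0 ≤ P := Finset.sum_nonneg fun n _ => div_nonneg (sq_nonneg _) (hlam n).le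
  have hlower : β * ‖S x‖ ^ 2 ≤ P := by
    simpa only [lam_mul_norm_div_sq (hlam _)] using hcoer (fun n => ℓ (e n) / lam n) t
  have hupper : P ≤ ‖S x‖ * ‖v‖ := by
    have := norm_inner_le_norm (𝕜 := ℂ) (S x) v
    rwa [← hadj_apply, apply_sum_div_smul, norm_real, Real.norm_of_nonneg hP] at this
  rw [le_div_iff₀ hβ]
  -- `P ≤ ‖Sx‖‖v‖ ≤ (β‖Sx‖² + ‖v‖²/β)/2 ≤ (P + ‖v‖²/β)/2`
  nlinarith [sq_nonneg (β * ‖S x‖ - ‖v‖)]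

end Adjoint

section Spectral
variable {X : Type*} [NormedAddCommGroup X] [InnerProductSpace ℂ X] [CompleteSpace X]

lemma inner_rieszJ_left (ℓ : ADual X) (x : X) : ⟪rieszJ ℓ, x⟫ = conj (ℓ x) :=
  toDual_symm_apply

namespace SpectralData
variable {A : X →L[ℂ] ADual X} {lam : ℕ → ℝ} {e : ℕ → X} {l : ℕ → ADual X}

lemma apply_basis (h : SpectralData A lam e l) (n : ℕ) (x : X) :
    A (e n) x = lam n * ⟪x, e n⟫ := by
  have := inner_rieszJ_left (A (e n)) x
  rw [h.eig n, inner_smul_left, conj_ofReal, ← inner_conj_symm] at this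
  simpa using congrArg conj this.symm

lemma apply_sum_apply_sum (h : SpectralData A lam e l) (c : ℕ → ℂ) (t : Finset ℕ) :
    A (∑ n ∈ t, c n • e n) (∑ n ∈ t, c n • e n) = ((∑ n ∈ t, lam n * ‖c n‖ ^ 2 : ℝ) : ℂ) := by
  rw [map_sum A, FunLike.coe_sum, Finset.sum_apply]
  push_cast
  refine Finset.sum_congr rfl fun n hn => ?_
  rw [map_smul, smul_apply, smul_eq_mul, h.apply_basis,
    h.orthonormal.inner_left_sum c hn, mul_left_comm, mul_conj']

lemma ext_dual (h : SpectralData A lam e l) {ℓ ℓ' : ADual X} (H : ∀ n, ℓ (e n) = ℓ' (e n)) :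
    ℓ = ℓ' :=
  ContinuousLinearMap.ext_on (Submodule.dense_iff_topologicalClosure_eq_top.mpr h.complete)
    (by rintro _ ⟨n, rfl⟩; exact H n)

end SpectralData

end Spectral

section Factorization
variable {X V : Type*} [NormedAddCommGroup X] [InnerProductSpace ℂ X] [CompleteSpace X]
  [NormedAddCommGroup V] [InnerProductSpace ℂ V]
  {A : X →L[ℂ] ADual X} {S : X →L[ℂ] V} {T : V →L[ℂ] V}
  {lam : ℕ → ℝ} {e : ℕ → X} {l : ℕ → ADual X}

lemma exists_mul_sq_norm_sum_le (hAS : A = (hadj S).comp (T.comp S)) (hT : CoerciveOnRange S T)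
    (hspec : SpectralData A lam e l) :
    ∃ β > 0, ∀ (c : ℕ → ℂ) (t : Finset ℕ),
      β * ‖S (∑ n ∈ t, c n • e n)‖ ^ 2 ≤ ∑ n ∈ t, lam n * ‖c n‖ ^ 2 := by
  obtain ⟨β, hβ, h⟩ := hT.exists_mul_sq_norm_le_re
  refine ⟨β, hβ, fun c t => ?_⟩
  have := h (∑ n ∈ t, c n • e n)
  rwa [← hAS, hspec.apply_sum_apply_sum, ofReal_re] at this

lemma hadj_apply_basis_of_hasSum (hAS : A = (hadj S).comp (T.comp S))
    (hspec : SpectralData A lam e l) {c : ℕ → ℂ} {w : V}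
    (hw : HasSum (fun n => c n • S (e n)) w) (m : ℕ) :
    hadj S (T w) (e m) = c m * lam m := by
  have hsum := hw.mapL ((innerSL ℂ (S (e m))).comp T)
  have hterm : ∀ n, (innerSL ℂ (S (e m))).comp T (c n • S (e n))
      = if n = m then c m * lam m else 0 := by
    intro n
    have hA := hspec.apply_basis n (e m)
    rw [hAS, ContinuousLinearMap.comp_apply, hadj_apply] at hA
    rw [ContinuousLinearMap.comp_apply, map_smul, map_smul, innerSL_apply_apply, smul_eq_mul,
      ← ContinuousLinearMap.comp_apply T S, hA, orthonormal_iff_ite.mp hspec.orthonormal]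
    by_cases hnm : n = m
    · subst hnm; simp
    · simp [hnm, Ne.symm hnm]
  simp only [hterm] at hsum
  exact hsum.unique (hasSum_ite_eq m _)

lemma mem_range_hadj_of_summable [CompleteSpace V] (hAS : A = (hadj S).comp (T.comp S))
    (hspec : SpectralData A lam e l) {β : ℝ} (hβ : 0 < β)
    (hcoer : ∀ (c : ℕ → ℂ) (t : Finset ℕ),
      β * ‖S (∑ n ∈ t, c n • e n)‖ ^ 2 ≤ ∑ n ∈ t, lam n * ‖c n‖ ^ 2)
    (ℓ : ADual X) (hsum : Summable fun n => ‖ℓ (e n)‖ ^ 2 / lam n) :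
    ℓ ∈ Set.range (hadj S) := by
  have hc : Summable fun n => (ℓ (e n) / lam n) • S (e n) := by
    refine summable_of_mul_sq_norm_sum_le hβ (fun t => ?_) hsum
    simpa only [map_sum, map_smul, lam_mul_norm_div_sq (hspec.pos _)] using
      hcoer (fun n => ℓ (e n) / lam n) t
  obtain ⟨w, hw⟩ := hc
  refine ⟨T w, hspec.ext_dual fun m => ?_⟩
  rw [hadj_apply_basis_of_hasSum hAS hspec hw m]
  exact div_mul_cancel₀ _ (ofReal_ne_zero.mpr (hspec.pos m).ne')

end Factorization

theorem range_Sstar_picard_general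
    {X V : Type*}
    [NormedAddCommGroup X] [InnerProductSpace ℂ X] [CompleteSpace X]
    [NormedAddCommGroup V] [InnerProductSpace ℂ V] [CompleteSpace V]
    (A : X →L[ℂ] ADual X)
    (S : X →L[ℂ] V) (T : V →L[ℂ] V)
    (hAS : A = (hadj S).comp (T.comp S))
    (hT : CoerciveOnRange S T)
    (lam : ℕ → ℝ) (e : ℕ → X) (l : ℕ → ADual X)
    (hspec : SpectralData A lam e l) :
    ∀ ℓ : ADual X,
      ℓ ∈ Set.range ⇑(hadj S) ↔
        Summable (fun n => (1 / lam n) * ‖dpair (e n) ℓ‖ ^ 2) := by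
  obtain ⟨β, hβ, hcoer⟩ := exists_mul_sq_norm_sum_le hAS hT hspec
  intro ℓ
  simp only [norm_dpair, one_div_mul_eq_div]
  constructor
  · rintro ⟨v, rfl⟩
    exact summable_of_sum_le (fun n => div_nonneg (sq_nonneg _) (hspec.pos n).le)
      (sum_norm_hadj_apply_sq_div_le hβ hspec.pos hcoer v)
  · exact mem_range_hadj_of_summable hAS hspec hβ hcoer ℓ

/-- If a positive `A = S*TS` with `S` compact and injective and `T`
coercive on `Range(S)`, then `ℓ ∈ Range(S*)` iff
`Σ_n (1/λ_n)|⟨x_n, ℓ⟩|² < ∞`, where `{λ_n; x_n; ℓ_n}` is the spectral data of `A`. -/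
theorem range_Sstar_picard
    {X V : Type*}
    [NormedAddCommGroup X] [InnerProductSpace ℂ X] [CompleteSpace X] [SeparableSpace X]
    [NormedAddCommGroup V] [InnerProductSpace ℂ V] [CompleteSpace V]
    (A : X →L[ℂ] ADual X) (hpos : IsPositiveOp A)
    (S : X →L[ℂ] V) (T : V →L[ℂ] V)
    (hAS : A = (hadj S).comp (T.comp S))
    (hScpt : IsCompactOperator ⇑S) (hSinj : Function.Injective ⇑S)
    (hT : CoerciveOnRange S T)
    (lam : ℕ → ℝ) (e : ℕ → X) (l : ℕ → ADual X)
    (hspec : SpectralData A lam e l) :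
    ∀ ℓ : ADual X,
      ℓ ∈ Set.range ⇑(hadj S) ↔
        Summable (fun n => (1 / lam n) * ‖dpair (e n) ℓ‖ ^ 2) :=
  range_Sstar_picard_general A S T hAS hT lam e l hspec
end
end

section
/- Let X be a separable complex Hilbert space, A : X → X* a positive compact linear operator with spectral data {λ_n; x_n; ℓ_n}, and {f_α}_{α>0} a family of filter functions satisfying additionally f_α(t) ≤ 1 for all α > 0 and t ∈ (0, λ₁]. Then for every ℓ ∈ X*, with x_α the regularized solution of Ax = ℓ, the limit lim_{α→0} ⟨x_α, Ax_α⟩_{X×X*} exists in [0, ∞] and equals Σ_n (1/λ_n) |⟨x_n, ℓ⟩_{X×X*}|². -/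
open Complex InnerProductSpace Filter Topology ENNReal TopologicalSpace

noncomputable section

local notation "⟪" x ", " y "⟫" => @inner ℂ _ _ x y

/-! In the eigenbasis, `⟨x_α, A x_α⟩ = Σ_n f_α(λ_n)² |⟨x_n, ℓ⟩|² / λ_n`. Since `0 ≤ f_α ≤ 1`,
every term is dominated by its limit `|⟨x_n, ℓ⟩|² / λ_n`, and in `[0, ∞]` termwise convergence
under such a domination passes to the sum: finite partial sums give the lower bound, the
domination the upper one. No summability of the Picard series is needed. -/

theorem ENNReal.tendsto_tsum_of_tendsto_of_le {ι β : Type*} {l : Filter β}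
    {F : β → ι → ℝ≥0∞} {G : ι → ℝ≥0∞} (hlim : ∀ i, Tendsto (F · i) l (𝓝 (G i)))
    (hle : ∀ᶠ b in l, ∀ i, F b i ≤ G i) :
    Tendsto (fun b => ∑' i, F b i) l (𝓝 (∑' i, G i)) := by
  refine tendsto_order.2 ⟨fun a ha => ?_, fun a ha => ?_⟩
  · obtain ⟨s, hs⟩ : ∃ s : Finset ι, a < ∑ i ∈ s, G i := by
      simpa [ENNReal.tsum_eq_iSup_sum, lt_iSup_iff] using ha
    filter_upwards [(tendsto_finsetSum s fun i _ => hlim i).eventually_const_lt hs]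
      with b hb using hb.trans_le (ENNReal.sum_le_tsum s)
  · filter_upwards [hle] with b hb using (ENNReal.tsum_le_tsum hb).trans_lt ha

section
variable {X : Type*} [NormedAddCommGroup X] [InnerProductSpace ℂ X]

theorem Orthonormal.inner_eq_of_hasSum {e : ℕ → X} (he : Orthonormal ℂ e) {c : ℕ → ℂ} {x : X}
    (hx : HasSum (fun n => c n • e n) x) (m : ℕ) : ⟪e m, x⟫ = c m := by
  have h := (innerSL ℂ (e m)).hasSum hx
  have hterm : ∀ n, innerSL ℂ (e m) (c n • e n) = if n = m then c m else 0 := by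
    intro n
    rw [innerSL_apply_apply, inner_smul_right, orthonormal_iff_ite.mp he m n]
    by_cases hnm : n = m
    · simp [hnm]
    · simp [hnm, Ne.symm hnm]
  simp only [hterm] at h
  exact h.unique (hasSum_ite_eq m (c m))

variable [CompleteSpace X]

theorem inner_rieszJ (ℓ : ADual X) (x : X) : ⟪rieszJ ℓ, x⟫ = dpair x ℓ :=
  InnerProductSpace.toDual_symm_apply

theorem apply_eq_of_rieszJ_eq_smul {ℓ : ADual X} {μ : ℝ} {v : X} (h : rieszJ ℓ = (μ : ℂ) • v)
    (y : X) : ℓ y = μ * starRingEnd ℂ ⟪v, y⟫ := by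
  have := congrArg (starRingEnd ℂ) (inner_rieszJ ℓ y)
  rw [h, inner_smul_left, dpair, Complex.conj_ofReal] at this
  simpa using this.symm

theorem hasSum_re_dpair_apply_self (A : X →L[ℂ] ADual X) {lam : ℕ → ℝ} {e : ℕ → X}
    (he : Orthonormal ℂ e) (heig : ∀ n, rieszJ (A (e n)) = (lam n : ℂ) • e n)
    {c : ℕ → ℂ} {x : X} (hx : HasSum (fun n => c n • e n) x) :
    HasSum (fun n => lam n * ‖c n‖ ^ 2) (dpair x (A x)).re := by
  have h := (ContinuousLinearMap.apply' ℂ (starRingEnd ℂ) x).hasSum (A.hasSum hx)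
  simp only [ContinuousLinearMap.apply_apply', map_smul, smul_eq_mul,
    apply_eq_of_rieszJ_eq_smul (heig _), he.inner_eq_of_hasSum hx] at h
  have hterm : ∀ n, c n * (lam n * starRingEnd ℂ (c n)) = ((lam n * ‖c n‖ ^ 2 : ℝ) : ℂ) := by
    intro n
    push_cast
    rw [← Complex.mul_conj']
    ring
  simp only [hterm] at h
  simpa only [dpair, Complex.conj_re, Complex.ofReal_re] using Complex.hasSum_re h

theorem IsRegSolution.hasSum_re_dpair {A : X →L[ℂ] ADual X} {lam : ℕ → ℝ} {e : ℕ → X}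
    {l : ℕ → ADual X} (hspec : SpectralData A lam e l) {f : ℝ → ℝ → ℝ} {ℓ : ADual X}
    {xa : ℝ → X} (hreg : IsRegSolution lam e f ℓ xa) {α : ℝ} (hα : 0 < α) :
    HasSum (fun n => f α (lam n) ^ 2 / lam n * ‖dpair (e n) ℓ‖ ^ 2)
      (dpair (xa α) (A (xa α))).re := by
  convert hasSum_re_dpair_apply_self A hspec.orthonormal hspec.eig (hreg α hα) using 2 with n
  have := (hspec.pos n).ne'
  simp only [norm_mul, mul_pow, Complex.norm_real, Real.norm_eq_abs, sq_abs, RCLike.norm_conj]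
  field_simp

end

theorem limit_regularized_eq_picard_sum_general
    {X : Type*} [NormedAddCommGroup X] [InnerProductSpace ℂ X] [CompleteSpace X]
    (A : X →L[ℂ] ADual X)
    (lam : ℕ → ℝ) (e : ℕ → X) (l : ℕ → ADual X)
    (hspec : SpectralData A lam e l)
    (Creg : ℝ) (f : ℝ → ℝ → ℝ) (hf : IsFilterFamily lam Creg f)
    (hf1 : ∀ α > (0 : ℝ), ∀ t ∈ Set.Ioc (0 : ℝ) (lam 0), f α t ≤ 1) :
    ∀ (ℓ : ADual X) (xa : ℝ → X), IsRegSolution lam e f ℓ xa →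
      Tendsto (fun α => ENNReal.ofReal ((dpair (xa α) (A (xa α))).re))
        (𝓝[>] (0 : ℝ))
        (𝓝 (∑' n, ENNReal.ofReal ((1 / lam n) * ‖dpair (e n) ℓ‖ ^ 2))) := by
  intro ℓ xa hreg
  obtain ⟨-, hf_tendsto, hf_nonneg⟩ := hf
  have hlam : ∀ n, lam n ∈ Set.Ioc 0 (lam 0) := fun n => ⟨hspec.pos n, hspec.anti n.zero_le⟩
  set F : ℝ → ℕ → ℝ := fun α n => f α (lam n) ^ 2 / lam n * ‖dpair (e n) ℓ‖ ^ 2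
  have hF_nonneg : ∀ α n, 0 ≤ F α n := fun α n =>
    mul_nonneg (div_nonneg (sq_nonneg _) (hspec.pos n).le) (sq_nonneg _)
  have hlim : Tendsto (fun α => ∑' n, ENNReal.ofReal (F α n)) (𝓝[>] 0)
      (𝓝 (∑' n, ENNReal.ofReal ((1 / lam n) * ‖dpair (e n) ℓ‖ ^ 2))) := by
    refine ENNReal.tendsto_tsum_of_tendsto_of_le (fun n => ?_) ?_
    · refine ENNReal.tendsto_ofReal ?_
      simpa using (((hf_tendsto _ (hlam n)).pow 2).div_const (lam n)).mul_const
        (‖dpair (e n) ℓ‖ ^ 2)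
    · filter_upwards [self_mem_nhdsWithin] with α hα n
      refine ENNReal.ofReal_le_ofReal ?_
      dsimp only [F]
      gcongr
      · exact (hspec.pos n).le
      · exact pow_le_one₀ (hf_nonneg α hα _ (hlam n)).1 (hf1 α hα _ (hlam n))
  refine hlim.congr' ?_
  filter_upwards [self_mem_nhdsWithin] with α hα
  have henergy := hreg.hasSum_re_dpair hspec hα
  rw [← ENNReal.ofReal_tsum_of_nonneg (hF_nonneg α) henergy.summable, henergy.tsum_eq]

/-- If additionally `f_α(t) ≤ 1` for all `α > 0` and `t ∈ (0, λ₁]`, then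
for every `ℓ ∈ X*` the limit `lim_{α→0} ⟨x_α, Ax_α⟩` exists in `[0, ∞]` and equals
`Σ_n (1/λ_n)|⟨x_n, ℓ⟩|²`. -/
theorem limit_regularized_eq_picard_sum
    {X : Type*} [NormedAddCommGroup X] [InnerProductSpace ℂ X] [CompleteSpace X]
    [SeparableSpace X]
    (A : X →L[ℂ] ADual X) (hpos : IsPositiveOp A) (hcpt : IsCompactOperator ⇑A)
    (lam : ℕ → ℝ) (e : ℕ → X) (l : ℕ → ADual X)
    (hspec : SpectralData A lam e l)
    (Creg : ℝ) (f : ℝ → ℝ → ℝ) (hf : IsFilterFamily lam Creg f)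
    (hf1 : ∀ α > (0 : ℝ), ∀ t ∈ Set.Ioc (0 : ℝ) (lam 0), f α t ≤ 1) :
    ∀ (ℓ : ADual X) (xa : ℝ → X), IsRegSolution lam e f ℓ xa →
      Tendsto (fun α => ENNReal.ofReal ((dpair (xa α) (A (xa α))).re))
        (𝓝[>] (0 : ℝ))
        (𝓝 (∑' n, ENNReal.ofReal ((1 / lam n) * ‖dpair (e n) ℓ‖ ^ 2))) :=
  limit_regularized_eq_picard_sum_general A lam e l hspec Creg f hf hf1
end
end
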